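/- Let G be a star 6-critical subcubic simple graph, and let v be a vertex with N_G(v) = {v₁, v₂, v₃}, where d_G(v₁) ≥ d_G(v₂) ≥ d_G(v₃) = 2, and let v₃* be the neighbor of v₃ other than v. Then d_G(v₁) = 3 and v₃* ∉ {v₁, v₂}. -/

import Mathlib

open SimpleGraph

/-- A star `k`-edge-coloring of `G`: a proper edge-coloring (adjacent edges get
distinct colors) such that no path or cycle of length four is bicolored, i.e.
no walk on four pairwise-distinct edges has its first and third edges equally
colored and its second and fourth edges equally colored. -/
def IsStarEdgeColoring {V : Type*} (G : SimpleGraph V) (k : ℕ)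
    (c : Sym2 V → Fin k) : Prop :=
  (∀ e₁ ∈ G.edgeSet, ∀ e₂ ∈ G.edgeSet, e₁ ≠ e₂ → (∃ v, v ∈ e₁ ∧ v ∈ e₂) →
      c e₁ ≠ c e₂) ∧
  (∀ v₀ v₁ v₂ v₃ v₄ : V, G.Adj v₀ v₁ → G.Adj v₁ v₂ → G.Adj v₂ v₃ → G.Adj v₃ v₄ →
    ([s(v₀, v₁), s(v₁, v₂), s(v₂, v₃), s(v₃, v₄)] : List (Sym2 V)).Pairwise (· ≠ ·) →
    ¬(c s(v₀, v₁) = c s(v₂, v₃) ∧ c s(v₁, v₂) = c s(v₃, v₄)))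

/-- `G` admits a star `k`-edge-coloring; equivalently, `χ'_s(G) ≤ k`. -/
def StarEdgeColorable {V : Type*} (G : SimpleGraph V) (k : ℕ) : Prop :=
  ∃ c : Sym2 V → Fin k, IsStarEdgeColoring G k c

/-- The graph `G - x` obtained from `G` by deleting the vertex `x`
(keeping the ambient vertex type; `x` becomes isolated, which does not affect
edge-colorings). -/
def SimpleGraph.deleteVert {V : Type*} (G : SimpleGraph V) (x : V) : SimpleGraph V where
  Adj u w := G.Adj u w ∧ u ≠ x ∧ w ≠ x
  symm := ⟨fun u w h => ⟨h.1.symm, h.2.2, h.2.1⟩⟩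
  loopless := ⟨fun u h => G.loopless.irrefl u h.1⟩

/-- `G` is star `k`-critical: `χ'_s(G) > k` but `χ'_s(G - v) ≤ k` for every vertex `v`. -/
def StarCritical {V : Type*} (G : SimpleGraph V) (k : ℕ) : Prop :=
  ¬ StarEdgeColorable G k ∧ ∀ v : V, StarEdgeColorable (G.deleteVert v) k

/-- The set of colors used by `c` on edges of `H` incident with `u`. -/
def colorsAt {V : Type*} (H : SimpleGraph V) {k : ℕ} (c : Sym2 V → Fin k) (u : V) :
    Set (Fin k) :=
  {a | ∃ w, H.Adj u w ∧ c s(u, w) = a}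

/-!
Both claims are proved by reducibility. If `d(v₁) = 2`, then all three neighbors of `v` have
degree `2`; if `v₃* ∈ {v₁, v₂}`, then `v₃` is a vertex of degree `2` on a triangle. In either
case a star `6`-edge-coloring of `G - x` (with `x = v`, resp. `x = v₃`) extends to `G`,
contradicting criticality. Coloring the edges at `x` can only create bicolored paths of length
four through `x`, and ruling these out constrains the new colors only through the colors at
distance at most two from `x`. In a subcubic graph each new color then has at most five
forbidden values, so a greedy choice succeeds; on the triangle a single configuration needs a
case distinction on which colors appear around the third neighbor of `v`.
-/

section

variable {V : Type*}

/-- A walk whose edges are colored `a b a b`. Only consecutive edges are required to be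
distinct; for proper colorings this already makes all four edges distinct. -/
structure IsBicoloredWalk {α : Type*} (G : SimpleGraph V) (c : Sym2 V → α)
    (x₀ x₁ x₂ x₃ x₄ : V) : Prop where
  adj₀₁ : G.Adj x₀ x₁
  adj₁₂ : G.Adj x₁ x₂
  adj₂₃ : G.Adj x₂ x₃
  adj₃₄ : G.Adj x₃ x₄
  ne₀₂ : x₀ ≠ x₂
  ne₁₃ : x₁ ≠ x₃
  ne₂₄ : x₂ ≠ x₄
  color_eq_odd : c s(x₀, x₁) = c s(x₂, x₃)
  color_eq_even : c s(x₁, x₂) = c s(x₃, x₄)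

section StarColoring

variable {G : SimpleGraph V} {k : ℕ} {c : Sym2 V → Fin k}

theorem IsBicoloredWalk.reverse {x₀ x₁ x₂ x₃ x₄ : V}
    (w : IsBicoloredWalk G c x₀ x₁ x₂ x₃ x₄) : IsBicoloredWalk G c x₄ x₃ x₂ x₁ x₀ where
  adj₀₁ := w.adj₃₄.symm
  adj₁₂ := w.adj₂₃.symm
  adj₂₃ := w.adj₁₂.symm
  adj₃₄ := w.adj₀₁.symm
  ne₀₂ := w.ne₂₄.symm
  ne₁₃ := w.ne₁₃.symm
  ne₂₄ := w.ne₀₂.symm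
  color_eq_odd := by rw [Sym2.eq_swap, ← w.color_eq_even, Sym2.eq_swap]
  color_eq_even := by rw [Sym2.eq_swap, ← w.color_eq_odd, Sym2.eq_swap]

theorem mem_colorsAt_of_adj {a b : V} (h : G.Adj a b) : c s(a, b) ∈ colorsAt G c a :=
  ⟨b, h, rfl⟩

theorem isStarEdgeColoring_iff :
    IsStarEdgeColoring G k c ↔
      (∀ a b b', G.Adj a b → G.Adj a b' → b ≠ b' → c s(a, b) ≠ c s(a, b')) ∧
      ∀ x₀ x₁ x₂ x₃ x₄, ¬ IsBicoloredWalk G c x₀ x₁ x₂ x₃ x₄ := by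
  constructor
  · rintro ⟨hproper, hstar⟩
    have proper : ∀ a b b', G.Adj a b → G.Adj a b' → b ≠ b' → c s(a, b) ≠ c s(a, b') :=
      fun a b b' hb hb' hne => hproper _ hb _ hb' (fun h => hne (Sym2.congr_right.1 h))
        ⟨a, Sym2.mem_mk_left a b, Sym2.mem_mk_left a b'⟩
    refine ⟨proper, fun x₀ x₁ x₂ x₃ x₄ w => hstar x₀ x₁ x₂ x₃ x₄ w.adj₀₁ w.adj₁₂ w.adj₂₃ w.adj₃₄
      ?_ ⟨w.color_eq_odd, w.color_eq_even⟩⟩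
    have h01 := w.adj₀₁.ne
    have h12 := w.adj₁₂.ne
    have h23 := w.adj₂₃.ne
    have h34 := w.adj₃₄.ne
    -- the first and last edges can only coincide on a closed triangle `x₀ x₁ x₂ x₀ x₁`,
    -- which has two equally colored edges at `x₀`
    have h03 : x₀ = x₃ → x₁ ≠ x₄ := by
      rintro rfl rfl
      exact proper x₀ x₁ x₂ w.adj₀₁ w.adj₂₃.symm h12
        (w.color_eq_odd.trans (congrArg c Sym2.eq_swap))
    simpa [w.ne₀₂, w.ne₁₃, w.ne₂₄, h01, h12, h23, h34] using h03
  · rintro ⟨proper, hwalk⟩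
    refine ⟨?_, fun x₀ x₁ x₂ x₃ x₄ h01 h12 h23 h34 hpw ⟨hodd, heven⟩ => ?_⟩
    · intro e₁ he₁ e₂ he₂ hne ⟨a, ha₁, ha₂⟩
      obtain ⟨b, rfl⟩ := (Sym2.mem_iff_exists).1 ha₁
      obtain ⟨b', rfl⟩ := (Sym2.mem_iff_exists).1 ha₂
      exact proper a b b' he₁ he₂ (fun h => hne (h ▸ rfl))
    · simp only [List.pairwise_cons, List.mem_cons, List.not_mem_nil,
        forall_eq_or_imp] at hpw
      obtain ⟨⟨p12, -, -, -⟩, ⟨p23, -, -⟩, ⟨p34, -⟩, -, -⟩ := hpw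
      exact hwalk x₀ x₁ x₂ x₃ x₄ ⟨h01, h12, h23, h34,
        fun h => p12 (by rw [h, Sym2.eq_swap]), fun h => p23 (by rw [h, Sym2.eq_swap]),
        fun h => p34 (by rw [h, Sym2.eq_swap]), hodd, heven⟩

end StarColoring

section Extension

variable [DecidableEq V] {α : Type*}

def extendAt (c : Sym2 V → α) (x : V) (f : V → α) : Sym2 V → α :=
  Sym2.lift ⟨fun a b => if a = x then f b else if b = x then f a else c s(a, b), by
    intro a b
    dsimp only
    split_ifs <;> simp_all [Sym2.eq_swap]⟩

variable {c : Sym2 V → α} {x : V} {f : V → α}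

@[simp] theorem extendAt_left (y : V) : extendAt c x f s(x, y) = f y := by
  simp [extendAt]

@[simp] theorem extendAt_right (y : V) : extendAt c x f s(y, x) = f y := by
  by_cases h : y = x <;> simp [extendAt, h]

theorem extendAt_of_ne {a b : V} (ha : a ≠ x) (hb : b ≠ x) :
    extendAt c x f s(a, b) = c s(a, b) := by
  simp [extendAt, ha, hb]

end Extension

/-- Conditions on the colors `f y` of the edges `x y` under which `extendAt c x f` is a star
coloring of `G`: besides properness, they exclude a bicolored `4`-walk having `x` as its middle
vertex (`center`), its second vertex (`second`) or an end vertex (`last`). -/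
structure IsStarExtension {k : ℕ} (G : SimpleGraph V) (c : Sym2 V → Fin k) (x : V)
    (f : V → Fin k) : Prop where
  injOn : Set.InjOn f (G.neighborSet x)
  notMem_colorsAt : ∀ y, G.Adj x y → f y ∉ colorsAt (G.deleteVert x) c y
  center : ∀ y y' z z', G.Adj x y → G.Adj x y' → y ≠ y' → (G.deleteVert x).Adj y z →
    (G.deleteVert x).Adj y' z' → ¬(c s(y, z) = f y' ∧ c s(y', z') = f y)
  second : ∀ y y' z t, G.Adj x y → G.Adj x y' → y ≠ y' → (G.deleteVert x).Adj y' z →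
    (G.deleteVert x).Adj z t → t ≠ y' → ¬(c s(y', z) = f y ∧ c s(z, t) = f y')
  last : ∀ y z t u, G.Adj x y → (G.deleteVert x).Adj y z → (G.deleteVert x).Adj z t →
    (G.deleteVert x).Adj t u → y ≠ t → z ≠ u → ¬(c s(z, t) = f y ∧ c s(y, z) = c s(t, u))

namespace IsStarExtension

variable [DecidableEq V] {G : SimpleGraph V} {k : ℕ} {c : Sym2 V → Fin k} {x : V}
  {f : V → Fin k} {x₀ x₁ x₂ x₃ x₄ : V}

theorem extendAt_ne_of_adj (hc : IsStarEdgeColoring (G.deleteVert x) k c)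
    (h : IsStarExtension G c x f) {a b b' : V} (hb : G.Adj a b) (hb' : G.Adj a b')
    (hne : b ≠ b') : extendAt c x f s(a, b) ≠ extendAt c x f s(a, b') := by
  have proper := (isStarEdgeColoring_iff.1 hc).1
  by_cases ha : a = x
  · subst ha
    simpa using fun heq => hne (h.injOn hb hb' heq)
  have hnew : ∀ {b b'}, G.Adj a b → G.Adj a b' → b ≠ b' → b = x →
      extendAt c x f s(a, b) ≠ extendAt c x f s(a, b') := by
    rintro b b' hb hb' hne rfl
    rw [extendAt_right, extendAt_of_ne ha (Ne.symm hne)]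
    exact fun heq => h.notMem_colorsAt a hb.symm
      (heq ▸ mem_colorsAt_of_adj ⟨hb', ha, Ne.symm hne⟩)
  by_cases hbx : b = x
  · exact hnew hb hb' hne hbx
  by_cases hb'x : b' = x
  · exact (hnew hb' hb hne.symm hb'x).symm
  rw [extendAt_of_ne ha hbx, extendAt_of_ne ha hb'x]
  exact proper a b b' ⟨hb, ha, hbx⟩ ⟨hb', ha, hb'x⟩ hne

theorem not_isBicoloredWalk_of_mid (h : IsStarExtension G c x f)
    (w : IsBicoloredWalk G (extendAt c x f) x₀ x₁ x₂ x₃ x₄) (h₂ : x₂ = x) : False := by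
  subst h₂
  have h₀ : x₀ ≠ x₂ := w.ne₀₂
  have h₄ : x₄ ≠ x₂ := w.ne₂₄.symm
  have h₁ : x₁ ≠ x₂ := w.adj₁₂.ne
  have h₃ : x₃ ≠ x₂ := w.adj₂₃.ne.symm
  have hodd := w.color_eq_odd
  have heven := w.color_eq_even
  rw [extendAt_of_ne h₀ h₁, extendAt_left] at hodd
  rw [extendAt_right, extendAt_of_ne h₃ h₄] at heven
  exact h.center x₁ x₃ x₀ x₄ w.adj₁₂.symm w.adj₂₃ w.ne₁₃ ⟨w.adj₀₁.symm, h₁, h₀⟩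
    ⟨w.adj₃₄, h₃, h₄⟩ ⟨(congrArg c Sym2.eq_swap).trans hodd, heven.symm⟩

theorem not_isBicoloredWalk_of_second (h : IsStarExtension G c x f)
    (w : IsBicoloredWalk G (extendAt c x f) x₀ x₁ x₂ x₃ x₄) (h₁ : x₁ = x) (h₂ : x₂ ≠ x) :
    False := by
  subst h₁
  have h₀ : x₀ ≠ x₁ := w.adj₀₁.ne
  have h₃ : x₃ ≠ x₁ := w.ne₁₃.symm
  have hodd := w.color_eq_odd
  have heven := w.color_eq_even
  rw [extendAt_right, extendAt_of_ne h₂ h₃] at hodd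
  rw [extendAt_left] at heven
  by_cases h₄ : x₄ = x₁
  · subst h₄
    rw [extendAt_right] at heven
    exact w.adj₂₃.ne (h.injOn w.adj₁₂ w.adj₃₄.symm heven)
  rw [extendAt_of_ne h₃ h₄] at heven
  exact h.second x₀ x₂ x₃ x₄ w.adj₀₁.symm w.adj₁₂ w.ne₀₂ ⟨w.adj₂₃, h₂, h₃⟩
    ⟨w.adj₃₄, h₃, h₄⟩ w.ne₂₄.symm ⟨hodd.symm, heven.symm⟩

theorem not_isBicoloredWalk_of_first (h : IsStarExtension G c x f)
    (w : IsBicoloredWalk G (extendAt c x f) x₀ x₁ x₂ x₃ x₄) (h₀ : x₀ = x) (h₁ : x₁ ≠ x)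
    (h₂ : x₂ ≠ x) (h₃ : x₃ ≠ x) : False := by
  subst h₀
  have hodd := w.color_eq_odd
  have heven := w.color_eq_even
  rw [extendAt_left, extendAt_of_ne h₂ h₃] at hodd
  rw [extendAt_of_ne h₁ h₂] at heven
  by_cases h₄ : x₄ = x₀
  · -- the closed walk `x₀ x₁ x₂ x₃ x₀` read from `x₁` has `x₀` as its second vertex
    subst h₄
    rw [extendAt_right] at heven
    exact h.second x₁ x₃ x₂ x₁ w.adj₀₁ w.adj₃₄.symm w.ne₁₃ ⟨w.adj₂₃.symm, h₃, h₂⟩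
      ⟨w.adj₁₂.symm, h₂, h₁⟩ w.ne₁₃ ⟨(congrArg c Sym2.eq_swap).trans hodd.symm,
        (congrArg c Sym2.eq_swap).trans heven⟩
  rw [extendAt_of_ne h₃ h₄] at heven
  exact h.last x₁ x₂ x₃ x₄ w.adj₀₁ ⟨w.adj₁₂, h₁, h₂⟩ ⟨w.adj₂₃, h₂, h₃⟩ ⟨w.adj₃₄, h₃, h₄⟩
    w.ne₁₃ w.ne₂₄ ⟨hodd.symm, heven⟩

theorem isBicoloredWalk_deleteVert (w : IsBicoloredWalk G (extendAt c x f) x₀ x₁ x₂ x₃ x₄)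
    (h₀ : x₀ ≠ x) (h₁ : x₁ ≠ x) (h₂ : x₂ ≠ x) (h₃ : x₃ ≠ x) (h₄ : x₄ ≠ x) :
    IsBicoloredWalk (G.deleteVert x) c x₀ x₁ x₂ x₃ x₄ where
  adj₀₁ := ⟨w.adj₀₁, h₀, h₁⟩
  adj₁₂ := ⟨w.adj₁₂, h₁, h₂⟩
  adj₂₃ := ⟨w.adj₂₃, h₂, h₃⟩
  adj₃₄ := ⟨w.adj₃₄, h₃, h₄⟩
  ne₀₂ := w.ne₀₂
  ne₁₃ := w.ne₁₃
  ne₂₄ := w.ne₂₄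
  color_eq_odd := by simpa [extendAt_of_ne, *] using w.color_eq_odd
  color_eq_even := by simpa [extendAt_of_ne, *] using w.color_eq_even

theorem isStarEdgeColoring (hc : IsStarEdgeColoring (G.deleteVert x) k c)
    (h : IsStarExtension G c x f) : IsStarEdgeColoring G k (extendAt c x f) := by
  refine isStarEdgeColoring_iff.2 ⟨fun a b b' => h.extendAt_ne_of_adj hc, ?_⟩
  intro x₀ x₁ x₂ x₃ x₄ w
  by_cases h₂ : x₂ = x
  · exact h.not_isBicoloredWalk_of_mid w h₂
  by_cases h₁ : x₁ = x
  · exact h.not_isBicoloredWalk_of_second w h₁ h₂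
  by_cases h₃ : x₃ = x
  · exact h.not_isBicoloredWalk_of_second w.reverse h₃ h₂
  by_cases h₀ : x₀ = x
  · exact h.not_isBicoloredWalk_of_first w h₀ h₁ h₂ h₃
  by_cases h₄ : x₄ = x
  · exact h.not_isBicoloredWalk_of_first w.reverse h₄ h₃ h₂ h₁
  exact (isStarEdgeColoring_iff.1 hc).2 _ _ _ _ _ (isBicoloredWalk_deleteVert w h₀ h₁ h₂ h₃ h₄)

end IsStarExtension

theorem Fin.exists_ne_ne_notMem {k : ℕ} (hk : 6 ≤ k) (p q : Fin k) {s : Set (Fin k)}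
    (hs : s.ncard ≤ 3) : ∃ a, a ≠ p ∧ a ≠ q ∧ a ∉ s := by
  by_contra! h
  have huniv : insert p (insert q s) = Set.univ :=
    Set.eq_univ_of_forall fun a => by
      by_cases hp : a = p
      · exact Or.inl hp
      by_cases hq : a = q
      · exact Or.inr (Or.inl hq)
      exact Or.inr (Or.inr (h a hp hq))
  have hcard := (Set.ncard_insert_le p _).trans (Nat.add_le_add_right (Set.ncard_insert_le q s) 1)
  rw [huniv, Set.ncard_univ, Nat.card_eq_fintype_card, Fintype.card_fin] at hcard
  omega

theorem exists_injective_fin_three {k : ℕ} (hk : 6 ≤ k) (S : Fin 3 → Set (Fin k))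
    (hS : ∀ i, (S i).ncard ≤ 3) (b : Fin 3 → Fin k) :
    ∃ a : Fin 3 → Fin k, Function.Injective a ∧ (∀ i, a i ∉ S i) ∧
      ∀ i j, i < j → a j ≠ b i := by
  obtain ⟨a₂, h₂₀, h₂₁, h₂⟩ := Fin.exists_ne_ne_notMem hk (b 0) (b 1) (hS 2)
  obtain ⟨a₁, h₁₀, h₁₂, h₁⟩ := Fin.exists_ne_ne_notMem hk (b 0) a₂ (hS 1)
  obtain ⟨a₀, h₀₁, h₀₂, h₀⟩ := Fin.exists_ne_ne_notMem hk a₁ a₂ (hS 0)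
  refine ⟨![a₀, a₁, a₂], ?_, ?_, ?_⟩
  · intro i j hij
    fin_cases i <;> fin_cases j <;> simp_all [eq_comm]
  · intro i
    fin_cases i <;> assumption
  · intro i j hij
    fin_cases i <;> fin_cases j <;> simp_all

theorem exists_colors_triangle {k : ℕ} (hk : 6 ≤ k) (s₁ s₂ t : Fin k) {B C : Set (Fin k)}
    (hB : B.ncard ≤ 3) (hC : C.ncard ≤ 3) (hs₂ : s₂ ∈ B) :
    ∃ α β, α ≠ s₁ ∧ α ≠ t ∧ α ∉ B ∧ β ≠ s₁ ∧ β ∉ C ∧ α ≠ β ∧ (β = s₂ → s₁ ∉ B) := by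
  by_cases hs₁ : s₁ ∈ B
  · by_cases hγ : ∃ γ ∈ C, γ ≠ s₁ ∧ γ ≠ t ∧ γ ∉ B
    · obtain ⟨γ, hγC, hγ₁, hγt, hγB⟩ := hγ
      obtain ⟨β, hβ₁, hβ₂, hβC⟩ := Fin.exists_ne_ne_notMem hk s₁ s₂ hC
      exact ⟨γ, β, hγ₁, hγt, hγB, hβ₁, hβC, fun h => hβC (h ▸ hγC), fun h => absurd h hβ₂⟩
    · push Not at hγ
      obtain ⟨α, hα₁, hαt, hαB⟩ := Fin.exists_ne_ne_notMem hk s₁ t hB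
      obtain ⟨β, hβα, hβt, hβB⟩ := Fin.exists_ne_ne_notMem hk α t hB
      have hβ₁ : β ≠ s₁ := fun h => hβB (h ▸ hs₁)
      exact ⟨α, β, hα₁, hαt, hαB, hβ₁, fun hβC => hβB (hγ β hβC hβ₁ hβt), hβα.symm,
        fun h => absurd (h ▸ hs₂) hβB⟩
  · obtain ⟨α, hα₁, hαt, hαB⟩ := Fin.exists_ne_ne_notMem hk s₁ t hB
    obtain ⟨β, hβ₁, hβα, hβC⟩ := Fin.exists_ne_ne_notMem hk s₁ α hC
    exact ⟨α, β, hα₁, hαt, hαB, hβ₁, hβC, hβα.symm, fun _ => hs₁⟩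

section Degree

variable {G : SimpleGraph V} {k : ℕ}

theorem colorsAt_deleteVert_subset (c : Sym2 V → Fin k) (x a : V) :
    colorsAt (G.deleteVert x) c a ⊆ colorsAt G c a :=
  fun _ ⟨b, hb, hcb⟩ => ⟨b, hb.1, hcb⟩

theorem ncard_colorsAt_le (c : Sym2 V → Fin k) (a : V) [Fintype (G.neighborSet a)] :
    (colorsAt G c a).ncard ≤ G.degree a := by
  have : colorsAt G c a = (fun b => c s(a, b)) '' G.neighborSet a := by
    ext; simp [colorsAt]
  rw [this, ← card_neighborFinset_eq_degree, ← Set.ncard_coe_finset, coe_neighborFinset]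
  exact Set.ncard_image_le (Set.toFinite _)

variable [Fintype V] [DecidableRel G.Adj]

theorem ncard_colorsAt_deleteVert_le (hdeg : ∀ a, G.degree a ≤ 3) (c : Sym2 V → Fin k)
    (x a : V) : (colorsAt (G.deleteVert x) c a).ncard ≤ 3 :=
  (Set.ncard_le_ncard (colorsAt_deleteVert_subset c x a)).trans
    ((ncard_colorsAt_le c a).trans (hdeg a))

variable [DecidableEq V]

theorem exists_adj_iff_of_degree_eq_two {x y : V} (hy : G.degree y = 2) (hxy : G.Adj y x) :
    ∃ w, w ≠ x ∧ ∀ a, G.Adj y a ↔ a = x ∨ a = w := by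
  rw [← card_neighborFinset_eq_degree, Finset.card_eq_two] at hy
  obtain ⟨p, q, hpq, hN⟩ := hy
  have hmem : ∀ a, G.Adj y a ↔ a = p ∨ a = q := fun a => by
    rw [← mem_neighborFinset, hN, Finset.mem_insert, Finset.mem_singleton]
  rcases (hmem x).1 hxy with rfl | rfl
  · exact ⟨q, hpq.symm, hmem⟩
  · exact ⟨p, hpq, fun a => (hmem a).trans or_comm⟩

theorem exists_adj_imp_of_degree_le_three {x y z : V} (hz : G.degree z ≤ 3) (hy : G.Adj z y)
    (hx : G.Adj z x) (hxy : y ≠ x) : ∃ u, ∀ a, G.Adj z a → a = y ∨ a = x ∨ a = u := by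
  have hcard : (((G.neighborFinset z).erase y).erase x).card ≤ 1 := by
    rw [Finset.card_erase_of_mem (by simpa [hxy.symm] using hx),
      Finset.card_erase_of_mem (by simpa using hy), card_neighborFinset_eq_degree]
    omega
  have : Nonempty V := ⟨z⟩
  obtain ⟨u, hu⟩ := Finset.card_le_one_iff_subset_singleton.1 hcard
  refine ⟨u, fun a ha => ?_⟩
  by_contra! h
  exact h.2.2 (Finset.mem_singleton.1 (hu (by simpa [h.1, h.2.1] using ha)))

end Degree

section Reducibility

variable {G : SimpleGraph V} {k : ℕ} {c : Sym2 V → Fin k} {x : V}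

-- An order on the neighbors decides, for each pair, which of the two conditions in `center`
-- is enforced.
theorem IsStarExtension.of_pendant {ι : Type*} [LinearOrder ι] {f : V → Fin k} (y w : ι → V)
    (hN : ∀ z, G.Adj x z → ∃ i, y i = z) (hw : ∀ i z, (G.deleteVert x).Adj (y i) z ↔ z = w i)
    (hinj : ∀ i j, f (y i) = f (y j) → i = j)
    (hS : ∀ i, f (y i) ∉ colorsAt (G.deleteVert x) c (w i))
    (hb : ∀ i j, i < j → f (y j) ≠ c s(y i, w i)) : IsStarExtension G c x f := by
  have hbS : ∀ i, c s(y i, w i) ∈ colorsAt (G.deleteVert x) c (w i) := fun i => by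
    rw [Sym2.eq_swap]
    exact mem_colorsAt_of_adj ((hw i _).2 rfl).symm
  refine ⟨?_, ?_, ?_, ?_, ?_⟩
  · rintro _ hp _ hq hpq
    obtain ⟨i, rfl⟩ := hN _ hp
    obtain ⟨j, rfl⟩ := hN _ hq
    rw [hinj i j hpq]
  · rintro _ hxy ⟨z, hz, hcz⟩
    obtain ⟨i, rfl⟩ := hN _ hxy
    rw [(hw i z).1 hz] at hcz
    exact hS i (hcz ▸ hbS i)
  · rintro _ _ z z' hxy hxy' hne hz hz' ⟨h₁, h₂⟩
    obtain ⟨i, rfl⟩ := hN _ hxy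
    obtain ⟨j, rfl⟩ := hN _ hxy'
    rw [(hw i z).1 hz] at h₁
    rw [(hw j z').1 hz'] at h₂
    rcases lt_or_gt_of_ne (fun hij : i = j => hne (hij ▸ rfl)) with hij | hij
    · exact hb i j hij h₁.symm
    · exact hb j i hij h₂.symm
  · rintro _ _ z t - hxy' - hz ht - ⟨-, h₂⟩
    obtain ⟨j, rfl⟩ := hN _ hxy'
    obtain rfl := (hw j z).1 hz
    exact hS j (h₂ ▸ mem_colorsAt_of_adj ht)
  · rintro _ z t - hxy hz ht - - - ⟨h₁, -⟩
    obtain ⟨i, rfl⟩ := hN _ hxy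
    obtain rfl := (hw i z).1 hz
    exact hS i (h₁ ▸ mem_colorsAt_of_adj ht)

theorem IsStarExtension.of_triangle {y z w u : V} {f : V → Fin k} {α β : Fin k}
    (hfy : f y = α) (hfz : f z = β) (hx : ∀ a, G.Adj x a ↔ a = y ∨ a = z)
    (hyH : ∀ p, (G.deleteVert x).Adj y p → p = z ∨ p = w)
    (hzH : ∀ p, (G.deleteVert x).Adj z p → p = y ∨ p = u)
    (hα₁ : α ≠ c s(y, z)) (hαt : α ≠ c s(z, u)) (hαB : α ∉ colorsAt (G.deleteVert x) c w)
    (hβ₁ : β ≠ c s(y, z)) (hβC : β ∉ colorsAt (G.deleteVert x) c u) (hαβ : α ≠ β)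
    (hβ₂ : β = c s(y, w) → c s(y, z) ∉ colorsAt (G.deleteVert x) c w) :
    IsStarExtension G c x f := by
  have hαz : α ∉ colorsAt (G.deleteVert x) c z := by
    rintro ⟨p, hp, hcp⟩
    rcases hzH p hp with rfl | rfl
    · exact hα₁ (hcp.symm.trans (congrArg c Sym2.eq_swap))
    · exact hαt hcp.symm
  have hβz : β ∉ colorsAt (G.deleteVert x) c z := by
    rintro ⟨p, hp, hcp⟩
    rcases hzH p hp with rfl | rfl
    · exact hβ₁ (hcp.symm.trans (congrArg c Sym2.eq_swap))
    · exact hβC (hcp ▸ Sym2.eq_swap (a := p) ▸ mem_colorsAt_of_adj hp.symm)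
  have hαy : α ∉ colorsAt (G.deleteVert x) c y := by
    rintro ⟨p, hp, hcp⟩
    rcases hyH p hp with rfl | rfl
    · exact hα₁ hcp.symm
    · exact hαB (hcp ▸ Sym2.eq_swap (a := y) ▸ mem_colorsAt_of_adj hp.symm)
  refine ⟨?_, ?_, ?_, ?_, ?_⟩
  · rintro p hp q hq hpq
    rcases (hx p).1 hp with rfl | rfl <;> rcases (hx q).1 hq with rfl | rfl
    · rfl
    · exact absurd (hfy ▸ hfz ▸ hpq) hαβ
    · exact absurd (hfy ▸ hfz ▸ hpq.symm) hαβ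
    · rfl
  · rintro p hp
    rcases (hx p).1 hp with rfl | rfl
    · exact hfy ▸ hαy
    · exact hfz ▸ hβz
  · rintro p p' q q' hp hp' hne hq hq' ⟨h₁, h₂⟩
    rcases (hx p).1 hp with rfl | rfl <;> rcases (hx p').1 hp' with rfl | rfl
    · exact hne rfl
    · exact hαz ⟨q', hq', h₂.trans hfy⟩
    · exact hαz ⟨q, hq, h₁.trans hfy⟩
    · exact hne rfl
  · rintro p p' q r hp hp' hne hq hr - ⟨h₁, h₂⟩
    rcases (hx p).1 hp with rfl | rfl <;> rcases (hx p').1 hp' with rfl | rfl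
    · exact hne rfl
    · exact hαz ⟨q, hq, h₁.trans hfy⟩
    · rcases hyH q hq with rfl | rfl
      · exact hβ₁ (h₁.trans hfz).symm
      · exact hαB ⟨r, hr, h₂.trans hfy⟩
    · exact hne rfl
  · rintro p q r s hp hq hr hs hpr - ⟨h₁, h₂⟩
    rcases (hx p).1 hp with rfl | rfl
    · rcases hyH q hq with rfl | rfl
      · exact hαz ⟨r, hr, h₁.trans hfy⟩
      · exact hαB ⟨r, hr, h₁.trans hfy⟩
    · rcases hzH q hq with rfl | rfl
      · -- `x z y w ⋯` is bicolored when `β = c s(y, w)` and the color of `y z` reappears at `w`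
        obtain rfl := (hyH r hr).resolve_left (Ne.symm hpr)
        exact hβ₂ (h₁.trans hfz).symm ⟨s, hs, (congrArg c Sym2.eq_swap).trans h₂ |>.symm⟩
      · exact hβC ⟨r, hr, h₁.trans hfz⟩

variable [DecidableEq V] [Fintype V] [DecidableRel G.Adj]

theorem StarEdgeColorable.of_deleteVert_of_degree_eq_two (hk : 6 ≤ k)
    (hdeg : ∀ a, G.degree a ≤ 3) (y : Fin 3 → V) (hy : Function.Injective y)
    (hN : G.neighborSet x = Set.range y) (h2 : ∀ i, G.degree (y i) = 2)
    (hc : StarEdgeColorable (G.deleteVert x) k) : StarEdgeColorable G k := by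
  obtain ⟨c, hc⟩ := hc
  have hadj : ∀ i, G.Adj x (y i) := fun i => by rw [← mem_neighborSet, hN]; exact ⟨i, rfl⟩
  choose w hwx hw using fun i => exists_adj_iff_of_degree_eq_two (h2 i) (hadj i).symm
  have hwH : ∀ i z, (G.deleteVert x).Adj (y i) z ↔ z = w i := fun i z =>
    ⟨fun hz => ((hw i z).1 hz.1).resolve_left hz.2.2,
      fun hz => hz ▸ ⟨(hw i _).2 (Or.inr rfl), (hadj i).ne.symm, hwx i⟩⟩
  obtain ⟨a, ha_inj, ha_S, ha_b⟩ := exists_injective_fin_three hk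
    (fun i => colorsAt (G.deleteVert x) c (w i))
    (fun i => ncard_colorsAt_deleteVert_le hdeg c x (w i)) (fun i => c s(y i, w i))
  have hf : ∀ i, Function.extend y a (fun _ => a 0) (y i) = a i := hy.extend_apply a _
  exact ⟨_, IsStarExtension.isStarEdgeColoring hc (IsStarExtension.of_pendant y w
    (fun z hz => by rwa [← mem_neighborSet, hN] at hz) hwH
    (fun i j hij => ha_inj (by rwa [hf, hf] at hij)) (fun i => hf i ▸ ha_S i)
    (fun i j hij => hf j ▸ ha_b i j hij))⟩

theorem StarEdgeColorable.of_deleteVert_of_triangle (hk : 6 ≤ k) (hdeg : ∀ a, G.degree a ≤ 3)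
    {y z w : V} (hx : ∀ a, G.Adj x a ↔ a = y ∨ a = z)
    (hy : ∀ a, G.Adj y a ↔ a = z ∨ a = w ∨ a = x) (hwx : w ≠ x)
    (hc : StarEdgeColorable (G.deleteVert x) k) : StarEdgeColorable G k := by
  obtain ⟨c, hc⟩ := hc
  have hxz : G.Adj x z := (hx z).2 (Or.inr rfl)
  have hyx : y ≠ x := ((hx y).2 (Or.inl rfl)).ne.symm
  have hyz : G.Adj y z := (hy z).2 (Or.inl rfl)
  obtain ⟨u, hu⟩ := exists_adj_imp_of_degree_le_three (hdeg z) hyz.symm hxz.symm hyx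
  have hs₂ : c s(y, w) ∈ colorsAt (G.deleteVert x) c w := by
    rw [Sym2.eq_swap]
    exact mem_colorsAt_of_adj ⟨((hy w).2 (Or.inr (Or.inl rfl))).symm, hwx, hyx⟩
  obtain ⟨α, β, hα₁, hαt, hαB, hβ₁, hβC, hαβ, hβ₂⟩ := exists_colors_triangle hk
    (c s(y, z)) (c s(y, w)) (c s(z, u)) (ncard_colorsAt_deleteVert_le hdeg c x w)
    (ncard_colorsAt_deleteVert_le hdeg c x u) hs₂
  have hyH : ∀ p, (G.deleteVert x).Adj y p → p = z ∨ p = w := fun p hp =>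
    ((hy p).1 hp.1).imp_right (Or.resolve_right · hp.2.2)
  have hzH : ∀ p, (G.deleteVert x).Adj z p → p = y ∨ p = u := fun p hp =>
    (hu p hp.1).imp_right (Or.resolve_left · hp.2.2)
  exact ⟨_, IsStarExtension.isStarEdgeColoring hc (IsStarExtension.of_triangle
    (f := fun a => if a = y then α else β) (if_pos rfl) (if_neg hyz.ne.symm) hx hyH hzH
    hα₁ hαt hαB hβ₁ hβC hαβ hβ₂)⟩

end Reducibility

end

/-- Corollary 3(a): `G` star 6-critical subcubic, `N_G(v) = {v₁, v₂, v₃}` with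
`d(v₁) ≥ d(v₂) ≥ d(v₃) = 2`, and `v₃*` the neighbor of `v₃` other than `v`.
Then `d(v₁) = 3` and `v₃* ∉ {v₁, v₂}`. -/
theorem cor3a {V : Type*} [Fintype V] [DecidableEq V] (G : SimpleGraph V)
    [DecidableRel G.Adj] (hsub : ∀ u : V, G.degree u ≤ 3)
    (hcrit : StarCritical G 6)
    (v v₁ v₂ v₃ : V) (h12 : v₁ ≠ v₂) (h13 : v₁ ≠ v₃) (h23 : v₂ ≠ v₃)
    (hN : G.neighborSet v = {v₁, v₂, v₃})
    (hd12 : G.degree v₂ ≤ G.degree v₁) (hd23 : G.degree v₃ ≤ G.degree v₂)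
    (hd3 : G.degree v₃ = 2)
    (v3s : V) (hadj : G.Adj v₃ v3s) (hne : v3s ≠ v) :
    G.degree v₁ = 3 ∧ v3s ≠ v₁ ∧ v3s ≠ v₂ := by
  obtain ⟨hnot, hdel⟩ := hcrit
  have hv : ∀ a, G.Adj v a ↔ a = v₁ ∨ a = v₂ ∨ a = v₃ := fun a => by
    rw [← mem_neighborSet, hN]; rfl
  obtain ⟨w, -, hw⟩ := exists_adj_iff_of_degree_eq_two hd3 ((hv v₃).2 (by simp)).symm
  obtain rfl : v3s = w := ((hw v3s).1 hadj).resolve_left hne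
  refine ⟨?_, ?_, ?_⟩
  · by_contra h1
    refine hnot (StarEdgeColorable.of_deleteVert_of_degree_eq_two le_rfl hsub ![v₁, v₂, v₃]
      ?_ ?_ ?_ (hdel v))
    · intro i j hij
      fin_cases i <;> fin_cases j <;> simp [h12, h13, h23, h12.symm, h13.symm, h23.symm] at hij ⊢
    · rw [hN]
      ext
      simp only [Set.mem_insert_iff, Set.mem_singleton_iff, Set.mem_range, Fin.exists_fin_succ]
      simp [eq_comm]
    · have := hsub v₁
      have h₁ : G.degree v₁ = 2 := by omega
      have h₂ : G.degree v₂ = 2 := by omega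
      intro i
      fin_cases i <;> assumption
  · rintro rfl
    exact hnot (StarEdgeColorable.of_deleteVert_of_triangle le_rfl hsub hw hv h23 (hdel v₃))
  · rintro rfl
    exact hnot (StarEdgeColorable.of_deleteVert_of_triangle le_rfl hsub hw
      (fun a => (hv a).trans or_left_comm) h13 (hdel v₃))
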